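/- Let (X, d) be a proper geodesic metric space, γ : [0,∞) → X a unit-speed geodesic ray and b its Busemann function. Then the descending slope |D⁻b|(x) := limsup_{y→x} (b(x) − b(y))⁺/d(x,y) equals 1 at every non-isolated point x ∈ X. -/

import Mathlib

/-! Since `b` is 1-Lipschitz, every difference quotient is at most `1`. Conversely, for `r > 0`
and `t` large, the point at distance `r` from `x` on a geodesic from `x` to `γ t` has
`b ≤ dist x (γ t) - t - r`; a minimum point `y` of `b` on the compact sphere of radius `r` around
`x` thus satisfies `b y ≤ b x - r`, so quotients equal to `1` occur arbitrarily close to `x`. -/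

open Filter Metric Set Topology

section GeodesicSpace

variable {X : Type*} [MetricSpace X]

theorem exists_dist_eq_and_dist_eq_sub_of_le_dist
    (hgeo : ∀ x y : X, ∃ g : ℝ → X, g 0 = x ∧ g 1 = y ∧
      ∀ s ∈ Icc (0:ℝ) 1, ∀ t ∈ Icc (0:ℝ) 1, dist (g s) (g t) = |s - t| * dist x y)
    {x z : X} {r : ℝ} (hr : 0 < r) (hrz : r ≤ dist x z) :
    ∃ p, dist x p = r ∧ dist p z = dist x z - r := by
  obtain ⟨g, hg0, hg1, hg⟩ := hgeo x z
  have hd : 0 < dist x z := hr.trans_le hrz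
  have hs : r / dist x z ∈ Icc (0:ℝ) 1 := ⟨by positivity, (div_le_one hd).2 hrz⟩
  refine ⟨g (r / dist x z), ?_, ?_⟩
  · have h := hg 0 (left_mem_Icc.2 zero_le_one) _ hs
    rwa [hg0, zero_sub, abs_neg, abs_of_nonneg hs.1, div_mul_cancel₀ r hd.ne'] at h
  · have h := hg _ hs 1 (right_mem_Icc.2 zero_le_one)
    rwa [hg1, abs_sub_comm, abs_of_nonneg (sub_nonneg.2 hs.2), sub_mul, one_mul,
      div_mul_cancel₀ r hd.ne'] at h

end GeodesicSpace

section Busemann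

variable {X : Type*} [MetricSpace X] {γ : ℝ → X} {b : X → ℝ}

theorem busemann_le_add_dist
    (hb : ∀ x : X, Tendsto (fun t : ℝ => dist x (γ t) - t) atTop (𝓝 (b x))) (u v : X) :
    b u ≤ b v + dist u v :=
  le_of_tendsto_of_tendsto' (hb u) ((hb v).add_const (dist u v)) fun t => by
    linarith [dist_triangle u v (γ t)]

theorem lipschitzWith_one_busemann
    (hb : ∀ x : X, Tendsto (fun t : ℝ => dist x (γ t) - t) atTop (𝓝 (b x))) :
    LipschitzWith 1 b :=
  LipschitzWith.of_le_add (busemann_le_add_dist hb)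

theorem busemann_le_dist_sub
    (hray : ∀ s t : ℝ, 0 ≤ s → 0 ≤ t → dist (γ s) (γ t) = |s - t|)
    (hb : ∀ x : X, Tendsto (fun t : ℝ => dist x (γ t) - t) atTop (𝓝 (b x)))
    (y : X) {t : ℝ} (ht : 0 ≤ t) : b y ≤ dist y (γ t) - t := by
  refine le_of_tendsto (hb y) ?_
  filter_upwards [eventually_ge_atTop t] with s hts
  have hγ : dist (γ t) (γ s) = s - t := by
    rw [hray t s ht (ht.trans hts), abs_sub_comm, abs_of_nonneg (sub_nonneg.2 hts)]
  linarith [dist_triangle y (γ t) (γ s)]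

theorem exists_dist_eq_busemann_le_sub [ProperSpace X]
    (hgeo : ∀ x y : X, ∃ g : ℝ → X, g 0 = x ∧ g 1 = y ∧
      ∀ s ∈ Icc (0:ℝ) 1, ∀ t ∈ Icc (0:ℝ) 1, dist (g s) (g t) = |s - t| * dist x y)
    (hray : ∀ s t : ℝ, 0 ≤ s → 0 ≤ t → dist (γ s) (γ t) = |s - t|)
    (hb : ∀ x : X, Tendsto (fun t : ℝ => dist x (γ t) - t) atTop (𝓝 (b x)))
    (x : X) {r : ℝ} (hr : 0 < r) : ∃ y, dist x y = r ∧ b y ≤ b x - r := by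
  have hfar : ∀ t ≥ r + dist (γ 0) x,
      ∃ p, dist x p = r ∧ b p ≤ dist x (γ t) - t - r := by
    intro t ht
    have ht0 : 0 ≤ t := by linarith [dist_nonneg (x := γ 0) (y := x)]
    have hγ : dist (γ 0) (γ t) = t := by
      rw [hray 0 t le_rfl ht0, zero_sub, abs_neg, abs_of_nonneg ht0]
    have hrt : r ≤ dist x (γ t) := by linarith [dist_triangle (γ 0) x (γ t)]
    obtain ⟨p, hxp, hpt⟩ := exists_dist_eq_and_dist_eq_sub_of_le_dist hgeo hr hrt
    exact ⟨p, hxp, by linarith [busemann_le_dist_sub hray hb p ht0]⟩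
  obtain ⟨p₀, hp₀, -⟩ := hfar _ le_rfl
  obtain ⟨y, hy, hmin⟩ := (isCompact_sphere x r).exists_isMinOn ⟨p₀, mem_sphere'.2 hp₀⟩
    (lipschitzWith_one_busemann hb).continuous.continuousOn
  refine ⟨y, mem_sphere'.1 hy, ge_of_tendsto ((hb x).sub_const r) ?_⟩
  filter_upwards [eventually_ge_atTop (r + dist (γ 0) x)] with t ht
  obtain ⟨p, hxp, hbp⟩ := hfar t ht
  exact (hmin (mem_sphere'.2 hxp)).trans hbp

end Busemann

theorem limsup_descending_slope_eq_one {X : Type*} [MetricSpace X] {f : X → ℝ} {x : X}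
    (hf : ∀ y, f x ≤ f y + dist x y)
    (hdrop : ∀ r > 0, ∃ y, dist x y = r ∧ f y ≤ f x - r) :
    limsup (fun y => max (f x - f y) 0 / dist x y) (𝓝[≠] x) = 1 := by
  have hle : ∀ᶠ y in 𝓝[≠] x, max (f x - f y) 0 / dist x y ≤ 1 := by
    filter_upwards [self_mem_nhdsWithin] with y hy
    rw [div_le_one (dist_pos.2 (Ne.symm hy))]
    exact max_le (sub_le_iff_le_add'.2 (hf y)) dist_nonneg
  have hge : ∃ᶠ y in 𝓝[≠] x, 1 ≤ max (f x - f y) 0 / dist x y := by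
    rw [nhdsWithin_basis_ball.frequently_iff]
    intro ε hε
    obtain ⟨y, hxy, hfy⟩ := hdrop (ε / 2) (half_pos hε)
    refine ⟨y, ⟨?_, ?_⟩, ?_⟩
    · rw [mem_ball', hxy]; linarith
    · rintro rfl; rw [dist_self] at hxy; linarith
    · rw [hxy, le_div_iff₀ (half_pos hε), one_mul]
      exact (le_sub_comm.1 hfy).trans (le_max_left _ _)
  exact le_antisymm (limsup_le_of_le (IsCoboundedUnder.of_frequently_ge hge) hle)
    (le_limsup_of_frequently_le hge (isBoundedUnder_of_eventually_le hle))

theorem statement11 {X : Type*} [MetricSpace X] [ProperSpace X]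
    (hgeo : ∀ x y : X, ∃ g : ℝ → X, g 0 = x ∧ g 1 = y ∧
      ∀ s ∈ Set.Icc (0:ℝ) 1, ∀ t ∈ Set.Icc (0:ℝ) 1, dist (g s) (g t) = |s - t| * dist x y)
    (γ : ℝ → X)
    (hray : ∀ s t : ℝ, 0 ≤ s → 0 ≤ t → dist (γ s) (γ t) = |s - t|)
    (b : X → ℝ)
    (hb : ∀ x : X, Filter.Tendsto (fun t : ℝ => dist x (γ t) - t) Filter.atTop (nhds (b x))) :
    ∀ x : X, (nhdsWithin x {x}ᶜ).NeBot →
      Filter.limsup (fun y : X => max (b x - b y) 0 / dist x y) (nhdsWithin x {x}ᶜ) = 1 :=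
  fun x _ => limsup_descending_slope_eq_one (busemann_le_add_dist hb x)
    fun _ hr => exists_dist_eq_busemann_le_sub hgeo hray hb x hr
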